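/- Let 1 < p < ∞, M ≥ 1, r := 1 + 1/M, and Φ(t) := t^{p'r} with p' = p/(p−1). Then there is a constant C depending only on p such that [Φ̄]_{B_p} ≤ C·M, where Φ̄ is the complementary Young function of Φ. -/

import Mathlib

/-!
Write `a = p'(1 + 1/M)` and let `q` be its conjugate exponent. Young's inequality gives
`Φ̄(t) ≤ t^q`, so `[Φ̄]_{B_p} ≤ ∫_{1/2}^∞ t^{q-p-1} dt = 2^{p-q}/(p-q)`. The gap
`p - q = p(p-1)/(M+p)` is of order `1/M`, which yields the bound `C·M`.
-/

noncomputable section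
open Set ENNReal MeasureTheory

/-- The complementary (conjugate) Young function: `φ̄(t) = sup_{s > 0} (s*t - φ(s))`. -/
def conjYoung (Φ : ℝ → ℝ) (t : ℝ) : ℝ :=
  sSup {u : ℝ | ∃ s : ℝ, 0 < s ∧ u = s * t - Φ s}

/-- `[φ]_{B_q} = ∫_{1/2}^∞ φ(t) t^{-q-1} dt`, as an extended nonnegative real. -/
def bpConst (q : ℝ) (Φ : ℝ → ℝ) : ℝ≥0∞ :=
  ∫⁻ t in Set.Ioi ((1 : ℝ) / 2), ENNReal.ofReal (Φ t / t ^ (q + 1))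

theorem conjYoung_rpow_le {a q t : ℝ} (haq : a.HolderConjugate q) (ht : 0 ≤ t) :
    conjYoung (fun s => s ^ a) t ≤ t ^ q := by
  refine Real.sSup_le ?_ (Real.rpow_nonneg ht q)
  rintro _ ⟨s, hs, rfl⟩
  have hyoung := Real.young_inequality_of_nonneg hs.le ht haq
  have hsa : s ^ a / a ≤ s ^ a := div_le_self (Real.rpow_nonneg hs.le a) haq.lt.le
  have htq : t ^ q / q ≤ t ^ q := div_le_self (Real.rpow_nonneg ht q) haq.symm.lt.le
  linarith

theorem bpConst_le_of_le_rpow {p q : ℝ} {Φ : ℝ → ℝ} (hqp : q < p)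
    (hΦ : ∀ t ∈ Ioi (1 / 2 : ℝ), Φ t ≤ t ^ q) :
    bpConst p Φ ≤ ENNReal.ofReal (2 ^ (p - q) / (p - q)) := by
  have hexp : q - p - 1 < -1 := by linarith
  have hpow_integral : ∫⁻ t in Ioi (1 / 2 : ℝ), ENNReal.ofReal (t ^ (q - p - 1)) =
      ENNReal.ofReal (2 ^ (p - q) / (p - q)) := by
    rw [← ofReal_integral_eq_lintegral_ofReal (integrableOn_Ioi_rpow_of_lt hexp one_half_pos),
      integral_Ioi_rpow_of_lt hexp one_half_pos, sub_add_cancel, one_div,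
      Real.inv_rpow zero_le_two, ← Real.rpow_neg zero_le_two, neg_sub, neg_div, ← div_neg, neg_sub]
    filter_upwards [ae_restrict_mem measurableSet_Ioi] with t ht
    exact Real.rpow_nonneg (one_half_pos.trans ht).le _
  rw [← hpow_integral]
  refine setLIntegral_mono' measurableSet_Ioi fun t ht => ENNReal.ofReal_le_ofReal ?_
  have ht0 : 0 < t := one_half_pos.trans ht
  rw [show q - p - 1 = q - (p + 1) by ring, Real.rpow_sub ht0]
  gcongr
  exact hΦ t ht

theorem sub_conjExponent_eq {p M : ℝ} (hp : 1 < p) (hM : 0 < M) :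
    p - (p / (p - 1) * (1 + 1 / M)).conjExponent = p * (p - 1) / (M + p) := by
  have hp1 : p - 1 ≠ 0 := by linarith
  have ha1 : p / (p - 1) * (1 + 1 / M) - 1 = (M + p) / (M * (p - 1)) := by
    field_simp
    ring
  rw [Real.conjExponent, ha1]
  field_simp
  ring

/-- for `1 < p < ∞`, `M ≥ 1`, `r = 1 + 1/M` and `Φ(t) = t^{p'r}`,
one has `[Φ̄]_{B_p} ≤ C·M` with `C` depending only on `p`. -/
theorem stmt16 (p : ℝ) (hp : 1 < p) :
    ∃ C : ℝ, 0 < C ∧ ∀ M : ℝ, 1 ≤ M →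
      bpConst p (conjYoung (fun t => t ^ (p / (p - 1) * (1 + 1 / M)))) ≤
        ENNReal.ofReal (C * M) := by
  have hp1 : 0 < p - 1 := by linarith
  refine ⟨2 ^ p * (p + 1) / (p * (p - 1)), by positivity, fun M hM => ?_⟩
  set a := p / (p - 1) * (1 + 1 / M)
  have ha : 1 < a := one_lt_mul_of_lt_of_le ((one_lt_div hp1).2 (by linarith))
    (le_add_of_nonneg_right (by positivity))
  have hconj : a.HolderConjugate a.conjExponent := .conjExponent ha
  have hgap := sub_conjExponent_eq hp (by linarith : 0 < M)
  set q := a.conjExponent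
  have hgap_pos : 0 < p - q := hgap ▸ by positivity
  calc bpConst p (conjYoung (fun t => t ^ a))
      ≤ ENNReal.ofReal (2 ^ (p - q) / (p - q)) :=
        bpConst_le_of_le_rpow (by linarith) fun t ht =>
          conjYoung_rpow_le hconj (one_half_pos.trans ht).le
    _ ≤ ENNReal.ofReal (2 ^ p * (p + 1) / (p * (p - 1)) * M) := by
        refine ENNReal.ofReal_le_ofReal ?_
        calc 2 ^ (p - q) / (p - q) ≤ 2 ^ p / (p - q) := by
              gcongr
              · norm_num
              · linarith [hconj.symm.lt]
          _ = 2 ^ p * (M + p) / (p * (p - 1)) := by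
              rw [hgap]
              field_simp
          _ ≤ 2 ^ p * (p + 1) / (p * (p - 1)) * M := by
              rw [div_mul_eq_mul_div, mul_assoc]
              gcongr
              nlinarith
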